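/- arXiv:2603.21198 — 2 statements merged into one kernel-verified Lean document; each statement's English description precedes it below -/
import Mathlib

section
/- Let w = (w₀,…,w_n) be positive integers, μ ≥ 2, and let η, η′ ∈ (ℤ/μℤ)^{n+1}. If η′ = κη + m·w̄ for some unit κ ∈ (ℤ/μℤ)* and some m ∈ ℤ (where w̄ denotes w reduced mod μ), then η and η′ generate the same subgroup relations: the matrix with rows w, η is almost free if and only if the matrix with rows w, η′ is almost free. -/
/-! The map `(a, b) ↦ (a, κ b + a m)` is an automorphism of `ℤ × ℤ/μ` carrying the columns of
`(w, η)` onto those of `(w, η')`, and automorphisms preserve generating sets. -/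

def AlmostFree {n : ℕ} (μ : ℕ) (w : Fin (n + 1) → ℤ) (η : Fin (n + 1) → ZMod μ) : Prop :=
  ∀ i : Fin (n + 1),
    AddSubgroup.closure ((fun j => ((w j, η j) : ℤ × ZMod μ)) '' {j | j ≠ i}) = ⊤

theorem AddSubgroup.closure_image_addEquiv_eq_top_iff {G H : Type*} [AddGroup G] [AddGroup H]
    (e : G ≃+ H) (s : Set G) :
    AddSubgroup.closure (e '' s) = ⊤ ↔ AddSubgroup.closure s = ⊤ := by
  rw [← map_eq_top_iff (AddEquiv.mapAddSubgroup e), AddEquiv.coe_mapAddSubgroup,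
    AddMonoidHom.map_closure]
  rfl

def shear {M : Type*} [AddCommGroup M] (σ : M ≃+ M) (c : M) : (ℤ × M) ≃+ (ℤ × M) where
  toFun p := (p.1, σ p.2 + p.1 • c)
  invFun p := (p.1, σ.symm (p.2 - p.1 • c))
  left_inv p := by simp
  right_inv p := by simp
  map_add' p q := by
    ext
    · rfl
    · simp only [Prod.fst_add, Prod.snd_add, map_add, add_smul]
      abel

theorem almostFree_iff_of_addEquiv {n μ : ℕ} (w : Fin (n + 1) → ℤ) (η η' : Fin (n + 1) → ZMod μ)
    (e : (ℤ × ZMod μ) ≃+ (ℤ × ZMod μ)) (he : ∀ j, (w j, η' j) = e (w j, η j)) :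
    AlmostFree μ w η ↔ AlmostFree μ w η' := by
  have hcols : (fun j => (w j, η' j)) = e ∘ fun j => (w j, η j) := funext he
  refine forall_congr' fun i => ?_
  rw [hcols, Set.image_comp, AddSubgroup.closure_image_addEquiv_eq_top_iff]

theorem stmt4_general (n μ : ℕ) (w : Fin (n + 1) → ℤ)
    (η η' : Fin (n + 1) → ZMod μ) (κ : (ZMod μ)ˣ) (m : ℤ)
    (hη' : ∀ i, η' i = (κ : ZMod μ) * η i + m * ((w i : ℤ) : ZMod μ)) :
    AlmostFree μ w η ↔ AlmostFree μ w η' :=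
  almostFree_iff_of_addEquiv w η η' (shear (DistribMulAction.toAddEquiv _ κ) m) fun j => by
    simp [shear, hη', Units.smul_def, mul_comm]

/-- If η′ = κη + m·w̄ for a unit κ and m ∈ ℤ, then the matrix with rows w, η is almost
free iff the matrix with rows w, η′ is almost free. -/
theorem stmt4 (n μ : ℕ) (hμ : 2 ≤ μ) (w : Fin (n + 1) → ℤ) (hw : ∀ i, 0 < w i)
    (η η' : Fin (n + 1) → ZMod μ) (κ : (ZMod μ)ˣ) (m : ℤ)
    (hη' : ∀ i, η' i = (κ : ZMod μ) * η i + m * ((w i : ℤ) : ZMod μ)) :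
    AlmostFree μ w η ↔ AlmostFree μ w η' :=
  stmt4_general n μ w η η' κ m hη'
end

section
/- Let w = (w₀,…,w_n) be a vector of positive integers, μ ≥ 2, and set g_{−1} = μ, g_i = gcd(μ, w₀,…,w_i), d_i = μ·g_i/g_{i−1} for 0 ≤ i ≤ n. Then for every η ∈ (ℤ/μℤ)^{n+1} and every unit κ ∈ (ℤ/μℤ)*, there exists a unique vector η′ in the coset {κη + m·w̄ : m ∈ ℤ} ⊆ (ℤ/μℤ)^{n+1} whose coordinates η′_i (taken as representatives in [0, μ)) satisfy 0 ≤ η′_i < d_i for all i = 0,…,n. -/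
/-!
For `a : ZMod N` the orbit `t ↦ a + t W` is the coset `a + (gcd N W)`, which has exactly one
point with value below `gcd N W`, namely `a.val % gcd N W`; it is reached for `t` in a single
residue class mod `N / gcd N W`. Imposing the bounds coordinate by coordinate, the admissible `m`
for the first `k` coordinates form one residue class mod `μ / g_k`: writing `m = m₀ + (μ / g_k) t`,
coordinate `k` moves along multiples of `(μ / g_k) w_k`, whose gcd with `μ` is
`(μ / g_k) g_{k+1} = d_k`. In the final class mod `μ / g_{n+1}` the vector does not depend on `m`,
since `g_{n+1}` divides every `w_i`.
-/

theorem Int.modEq_div_gcd_iff_mul_right {m a b c : ℤ} (hm : 0 < m) :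
    a ≡ b [ZMOD m / gcd m c] ↔ a * c ≡ b * c [ZMOD m] := by
  refine ⟨fun h => h.mul_right'.of_dvd ?_, Int.ModEq.cancel_right_div_gcd hm⟩
  obtain ⟨c', hc'⟩ := Int.gcd_dvd_right m c
  refine ⟨c', ?_⟩
  nth_rw 2 [hc']
  rw [← mul_assoc, Int.ediv_mul_cancel (Int.gcd_dvd_left m c)]

namespace ZMod

variable {N : ℕ} [NeZero N]

theorem val_add_mul_mod_gcd (a : ZMod N) (t : ℤ) (W : ℕ) :
    (a + t * W).val % N.gcd W = a.val % N.gcd W := by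
  have hG := Nat.gcd_dvd_left N W
  rw [← natCast_eq_natCast_iff', natCast_val, natCast_val,
    cast_add hG, cast_mul hG, cast_intCast hG, cast_natCast hG,
    (natCast_eq_zero_iff _ _).2 (Nat.gcd_dvd_right N W), mul_zero, add_zero]

theorem exists_add_mul_eq_val_mod_gcd (a : ZMod N) (W : ℕ) :
    ∃ t₀ : ℤ, a + t₀ * W = (a.val % N.gcd W : ℕ) := by
  refine ⟨-(a.val / N.gcd W : ℕ) * N.gcdB W, ?_⟩
  have hbezout := congrArg (Int.cast : ℤ → ZMod N) (Nat.gcd_eq_gcd_ab N W)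
  have hdiv := congrArg (Nat.cast : ℕ → ZMod N) (Nat.mod_add_div a.val (N.gcd W))
  push_cast [natCast_self, natCast_zmod_val] at hbezout hdiv
  rw [Int.cast_mul, Int.cast_neg, Int.cast_natCast]
  linear_combination -hdiv + ((a.val / N.gcd W : ℕ) : ZMod N) * hbezout

theorem exists_val_add_mul_lt_gcd_iff (a : ZMod N) (W : ℕ) :
    ∃ t₀ : ℤ, ∀ t : ℤ, (a + t * W).val < N.gcd W ↔ t ≡ t₀ [ZMOD (N / N.gcd W : ℕ)] := by
  have hN := NeZero.pos N
  have hG : 0 < N.gcd W := Nat.gcd_pos_of_pos_left W hN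
  obtain ⟨t₀, ht₀⟩ := exists_add_mul_eq_val_mod_gcd a W
  have hval₀ : (a + t₀ * W).val = a.val % N.gcd W := by
    rw [ht₀, val_cast_of_lt ((Nat.mod_lt _ hG).trans_le (Nat.gcd_le_left W hN))]
  refine ⟨t₀, fun t => ?_⟩
  calc (a + t * W).val < N.gcd W ↔ (a + t * W).val = (a + t₀ * W).val := by
        refine ⟨fun h => ?_, fun h => h ▸ hval₀ ▸ Nat.mod_lt _ hG⟩
        rw [hval₀, ← val_add_mul_mod_gcd a t W, Nat.mod_eq_of_lt h]
    _ ↔ ((t * W : ℤ) : ZMod N) = ((t₀ * W : ℤ) : ZMod N) := by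
        push_cast
        rw [(val_injective N).eq_iff, add_right_inj]
    _ ↔ t ≡ t₀ [ZMOD (N / N.gcd W : ℕ)] := by
        rw [intCast_eq_intCast_iff, ← Int.modEq_div_gcd_iff_mul_right (by exact_mod_cast hN),
          Int.gcd_natCast_natCast, Int.natCast_div]

theorem exists_modEq_and_val_lt_iff {c q : ℕ} (hN : N = c * q) (a : ZMod N) (W : ℕ) (m₀ : ℤ) :
    ∃ m₁ : ℤ, ∀ m : ℤ, (m ≡ m₀ [ZMOD c] ∧ (a + m * W).val < c * q.gcd W) ↔
      m ≡ m₁ [ZMOD (c * (q / q.gcd W) : ℕ)] := by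
  have hc : 0 < c := Nat.pos_of_mul_pos_right (hN ▸ NeZero.pos N)
  have hc' : (c : ℤ) ≠ 0 := by exact_mod_cast hc.ne'
  obtain ⟨t₀, ht₀⟩ := exists_val_add_mul_lt_gcd_iff (a + m₀ * W : ZMod N) (c * W)
  have hgcd : N.gcd (c * W) = c * q.gcd W := by rw [hN, Nat.gcd_mul_left]
  have hquot : N / (c * q.gcd W) = q / q.gcd W := by rw [hN, Nat.mul_div_mul_left _ _ hc]
  rw [hgcd, hquot] at ht₀
  have hm₁ : m₀ + c * t₀ ≡ m₀ [ZMOD c] :=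
    Int.modEq_iff_dvd.2 ⟨-t₀, by ring⟩
  have hlt_iff : ∀ m : ℤ, m ≡ m₀ [ZMOD c] →
      ((a + m * W).val < c * q.gcd W ↔ m ≡ m₀ + c * t₀ [ZMOD (c * (q / q.gcd W) : ℕ)]) := by
    intro m hm
    obtain ⟨t, ht⟩ := hm.symm.dvd
    have hmt : m = m₀ + c * t := by linear_combination ht
    rw [Int.modEq_iff_dvd, hmt, show m₀ + c * t₀ - (m₀ + c * t) = c * (t₀ - t) by ring,
      Nat.cast_mul, mul_dvd_mul_iff_left hc', ← Int.modEq_iff_dvd, ← ht₀]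
    congr! 2
    push_cast
    ring
  refine ⟨m₀ + c * t₀, fun m => ⟨fun ⟨hm, hlt⟩ => (hlt_iff m hm).1 hlt, fun hm => ?_⟩⟩
  rw [Nat.cast_mul] at hm
  have hmc : m ≡ m₀ [ZMOD c] := (hm.of_mul_right _).trans hm₁
  exact ⟨hmc, (hlt_iff m hmc).2 (by rwa [Nat.cast_mul])⟩

theorem intCast_mul_eq_of_modEq_div {μ G W : ℕ} (hGμ : G ∣ μ) (hGW : G ∣ W) {m m₀ : ℤ}
    (h : m ≡ m₀ [ZMOD (μ / G : ℕ)]) : (m : ZMod μ) * W = m₀ * W := by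
  obtain ⟨W', rfl⟩ := hGW
  have hdvd : μ ∣ μ / G * (G * W') := ⟨W', by rw [← mul_assoc, Nat.div_mul_cancel hGμ]⟩
  rw [← Int.cast_natCast, ← Int.cast_mul, ← Int.cast_mul, intCast_eq_intCast_iff]
  exact h.mul_right'.of_dvd (by exact_mod_cast hdvd)

end ZMod

def IsGcdChain {n : ℕ} (w : Fin n → ℕ) (g : ℕ → ℕ) : Prop :=
  ∀ i : Fin n, g (i + 1) = (g i).gcd (w i)

namespace IsGcdChain

variable {n μ : ℕ} {w : Fin n → ℕ} {g : ℕ → ℕ}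

theorem dvd_of_le (hg : IsGcdChain w g) {a b : ℕ} (hab : a ≤ b) (hb : b ≤ n) : g b ∣ g a := by
  induction b, hab using Nat.le_induction with
  | base => exact dvd_rfl
  | succ b _ ih =>
    have hstep : g (b + 1) = (g b).gcd (w ⟨b, hb⟩) := hg ⟨b, hb⟩
    exact (hstep ▸ Nat.gcd_dvd_left _ _).trans (ih (by omega))

theorem exists_forall_val_lt_iff_modEq [NeZero μ] (hg : IsGcdChain w g) (hg0 : g 0 = μ)
    (x : Fin n → ZMod μ) {k : ℕ} (hk : k ≤ n) :
    ∃ m₀ : ℤ, ∀ m : ℤ, (∀ i : Fin n, (i : ℕ) < k → (x i + m * w i).val < μ / g i * g (i + 1)) ↔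
      m ≡ m₀ [ZMOD (μ / g k : ℕ)] := by
  induction k with
  | zero => exact ⟨0, fun m => by simp [hg0, Nat.div_self (NeZero.pos μ), Int.modEq_one]⟩
  | succ k ih =>
    obtain ⟨m₀, hm₀⟩ := ih (by omega)
    set i : Fin n := ⟨k, hk⟩
    have hgk : g k ∣ μ := hg0 ▸ hg.dvd_of_le (Nat.zero_le k) (by omega)
    have hgk' : g (k + 1) ∣ g k := hg.dvd_of_le (Nat.le_succ k) hk
    have hgi : g (k + 1) = (g k).gcd (w i) := hg i
    have hmod : μ / g k * (g k / g (k + 1)) = μ / g (k + 1) :=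
      (Nat.div_eq_of_eq_mul_left (Nat.pos_of_dvd_of_pos (hgk'.trans hgk) (NeZero.pos μ))
        (by rw [mul_assoc, Nat.div_mul_cancel hgk', Nat.div_mul_cancel hgk])).symm
    obtain ⟨m₁, hm₁⟩ :=
      ZMod.exists_modEq_and_val_lt_iff (Nat.div_mul_cancel hgk).symm (x i) (w i) m₀
    rw [← hgi, hmod] at hm₁
    refine ⟨m₁, fun m => ?_⟩
    rw [← hm₁ m, ← hm₀ m]
    refine ⟨fun h => ⟨fun j hj => h j (by omega), h i (Nat.lt_succ_self k)⟩, ?_⟩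
    rintro ⟨h, hi⟩ j hj
    rcases Nat.lt_succ_iff_lt_or_eq.1 hj with hj | hj
    · exact h j hj
    · obtain rfl : j = i := Fin.ext hj
      exact hi

end IsGcdChain

theorem stmt5_general (n μ : ℕ) (hμ : 2 ≤ μ) (w : Fin (n + 1) → ℕ)
    (g : ℕ → ℕ) (hg0 : g 0 = μ)
    (hg : ∀ i : Fin (n + 1), g (i + 1) = Nat.gcd (g i) (w i))
    (d : Fin (n + 1) → ℕ) (hd : ∀ i : Fin (n + 1), d i = μ * g (i + 1) / g i)
    (η : Fin (n + 1) → ZMod μ) (κ : (ZMod μ)ˣ) :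
    ∃! η' : Fin (n + 1) → ZMod μ,
      (∃ m : ℤ, ∀ i, η' i = (κ : ZMod μ) * η i + m * ((w i : ℕ) : ZMod μ)) ∧
      ∀ i, (η' i).val < d i := by
  have : NeZero μ := ⟨by omega⟩
  have hchain : IsGcdChain w g := hg
  have hgμ : ∀ k ≤ n + 1, g k ∣ μ := fun k hk => hg0 ▸ hchain.dvd_of_le (Nat.zero_le k) hk
  have hd' : ∀ i : Fin (n + 1), d i = μ / g i * g (i + 1) := fun i => by
    rw [hd i, Nat.div_mul_right_comm (hgμ i (by omega))]
  have hgw : ∀ i : Fin (n + 1), g (n + 1) ∣ w i := fun i =>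
    (hchain.dvd_of_le (Nat.succ_le_of_lt i.2) le_rfl).trans (hg i ▸ Nat.gcd_dvd_right _ _)
  obtain ⟨m₀, hm₀⟩ := hchain.exists_forall_val_lt_iff_modEq hg0 (fun i => κ * η i) le_rfl
  refine ⟨fun i => κ * η i + m₀ * w i, ⟨⟨m₀, fun i => rfl⟩, fun i => ?_⟩, ?_⟩
  · rw [hd']
    exact (hm₀ m₀).2 (Int.ModEq.refl _) i i.2
  · rintro η' ⟨⟨m, hm⟩, hlt⟩
    have hmod := (hm₀ m).1 fun i _ => hd' i ▸ hm i ▸ hlt i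
    funext i
    rw [hm i, ZMod.intCast_mul_eq_of_modEq_div (hgμ _ le_rfl) (hgw i) hmod]

/-- Normalized representatives: with g 0 = μ (this is g_{−1}) and
g (i+1) = gcd(g i, w i) (so g (i+1) = gcd(μ, w₀, …, w_i)) and d i = μ * g (i+1) / g i,
every coset {κη + m·w̄ : m ∈ ℤ} contains a unique η′ with coordinates
(as representatives in [0,μ)) satisfying η′_i < d i for all i. -/
theorem stmt5 (n μ : ℕ) (hμ : 2 ≤ μ) (w : Fin (n + 1) → ℕ) (hw : ∀ i, 0 < w i)
    (g : ℕ → ℕ) (hg0 : g 0 = μ)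
    (hg : ∀ i : Fin (n + 1), g (i + 1) = Nat.gcd (g i) (w i))
    (d : Fin (n + 1) → ℕ) (hd : ∀ i : Fin (n + 1), d i = μ * g (i + 1) / g i)
    (η : Fin (n + 1) → ZMod μ) (κ : (ZMod μ)ˣ) :
    ∃! η' : Fin (n + 1) → ZMod μ,
      (∃ m : ℤ, ∀ i, η' i = (κ : ZMod μ) * η i + m * ((w i : ℕ) : ZMod μ)) ∧
      ∀ i, (η' i).val < d i :=
  stmt5_general n μ hμ w g hg0 hg d hd η κ
end
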